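/- arXiv:1506.01264 — 3 statements merged into one kernel-verified Lean document; each statement's English description precedes it below -/
import Mathlib

section
/- Fix an integer n ≥ 1, and let Σ be the collection of all paths σ : I_k → I_n (for all 1 ≤ k ≤ n) satisfying the two properties: (i) the range of σ contains I_{k−1}; (ii) for every j ≤ k, the set I_j contains at least j−1 elements of the image σ(I_j). Then Σ is an admissible collection of paths in I_n; that is: (1) for each j ∈ I_n there is a path σ ∈ Σ of length one with σ(1) = j; (2) for each path σ̃ ∈ Σ of any length k < n there is a path σ ∈ Σ of length k+1 whose restriction to I_k coincides with σ̃; (3) for each path σ ∈ Σ of any length k ≥ 2 there is a path τ ∈ Σ of the same length k which coincides with σ on I_{k−2} and satisfies σ(k−1) = τ(k) and τ(k−1) = σ(k). -/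
/-- The specific collection of paths from the paper: an injective `σ : Fin k → Fin n`
(a path in `I_n` of length `k`, written 0-indexed) such that
(i) the range of `σ` contains `I_{k-1}` (the first `k-1` elements of `Fin n`), and
(ii) for every `j ≤ k`, the set `I_j` (first `j` elements) contains at least `j-1`
elements of the image of `I_j` under `σ`. -/
def GoodPath (n k : ℕ) (σ : Fin k → Fin n) : Prop :=
  Function.Injective σ ∧
  (∀ j : Fin n, (j : ℕ) < k - 1 → j ∈ Set.range σ) ∧
  (∀ j : ℕ, 1 ≤ j → j ≤ k →
    j - 1 ≤ (Finset.univ.filter fun l : Fin k => (l : ℕ) < j ∧ ((σ l : Fin n) : ℕ) < j).card)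

/-!
To extend a good path of length `k < n`, append the value `k` if the path misses it and any
missed value otherwise. The range of the extension then contains `I_k`, so these `k` values all
occur and the count condition at `j = k + 1` holds; for smaller `j` the counts can only grow.

Swapping the last two values changes no count at `j ≤ k - 2` or `j = k`. At `j = k - 1`, the
`k - 1` values of `I_{k-1}` all occur in `σ`, and after the swap only the one formerly at
position `k - 1` can sit outside `I_{k-1}`.
-/

open Finset

section

variable {n k : ℕ}

lemma le_card_filter_of_lt_mem_range {σ : Fin k → Fin n} {m : ℕ} (hm : m ≤ n)
    (hrange : ∀ w : Fin n, (w : ℕ) < m → w ∈ Set.range σ) :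
    m ≤ #{l : Fin k | ((σ l : Fin n) : ℕ) < m} := by
  calc m = #{w : Fin n | (w : ℕ) < m} := by rw [Fin.card_filter_val_lt, min_eq_right hm]
    _ ≤ #(image σ {l : Fin k | ((σ l : Fin n) : ℕ) < m}) := by
        refine card_le_card fun w hw => ?_
        obtain ⟨l, rfl⟩ := hrange w (mem_filter.mp hw).2
        exact mem_image_of_mem σ (mem_filter.mpr ⟨mem_univ l, (mem_filter.mp hw).2⟩)
    _ ≤ _ := card_image_le

lemma val_swap_lt_iff (hk : 0 < k) {j : ℕ} (hj : j ≠ k - 1) (hjk : j ≤ k) (l : Fin k) :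
    ((Equiv.swap (⟨k - 2, by omega⟩ : Fin k) ⟨k - 1, by omega⟩ l : Fin k) : ℕ) < j ↔
      (l : ℕ) < j := by
  rw [Equiv.swap_apply_def]
  split_ifs <;> simp_all [Fin.ext_iff] <;> omega

lemma val_swap_lt_pred_iff (hk : 0 < k) (l : Fin k) :
    ((Equiv.swap (⟨k - 2, by omega⟩ : Fin k) ⟨k - 1, by omega⟩ l : Fin k) : ℕ) < k - 1 ↔
      l ≠ ⟨k - 2, by omega⟩ := by
  rw [Equiv.swap_apply_def]
  split_ifs <;> simp_all [Fin.ext_iff] <;> omega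

lemma exists_fresh_value {σ : Fin k → Fin n} (hkn : k < n)
    (hrange : ∀ w : Fin n, (w : ℕ) < k - 1 → w ∈ Set.range σ) :
    ∃ v : Fin n, v ∉ Set.range σ ∧ ∀ w : Fin n, (w : ℕ) < k → w ∈ Set.range σ ∨ w = v := by
  by_cases hmem : (⟨k - 1, by omega⟩ : Fin n) ∈ Set.range σ
  · obtain ⟨v, hv⟩ : ∃ v, v ∉ Set.range σ := by
      by_contra! hsurj
      have := Fintype.card_le_of_surjective σ hsurj
      simp only [Fintype.card_fin] at this
      omega
    refine ⟨v, hv, fun w hw => Or.inl ?_⟩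
    by_cases hw' : (w : ℕ) < k - 1
    · exact hrange w hw'
    · rwa [show w = ⟨k - 1, by omega⟩ from Fin.ext (by simp only; omega)]
  · refine ⟨_, hmem, fun w hw => ?_⟩
    by_cases hw' : (w : ℕ) < k - 1
    · exact Or.inl (hrange w hw')
    · exact Or.inr (Fin.ext (by simp only; omega))

end

namespace GoodPath

variable {n k : ℕ}

def lowCount (σ : Fin k → Fin n) (j : ℕ) : ℕ :=
  #{l : Fin k | (l : ℕ) < j ∧ ((σ l : Fin n) : ℕ) < j}

lemma lowCount_le_lowCount_snoc (σ : Fin k → Fin n) (v : Fin n) (j : ℕ) :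
    lowCount σ j ≤ lowCount (Fin.snoc σ v : Fin (k + 1) → Fin n) j :=
  card_le_card_of_injOn Fin.castSucc (fun l hl => by simpa using hl)
    (Fin.castSucc_injective k).injOn

lemma lowCount_comp_perm (σ : Fin k → Fin n) (e : Equiv.Perm (Fin k)) (j : ℕ) :
    lowCount (σ ∘ e) j = #{l : Fin k | ((e.symm l : Fin k) : ℕ) < j ∧ ((σ l : Fin n) : ℕ) < j} :=
  card_equiv e fun l => by simp

theorem exists_snoc {σ : Fin k → Fin n} (h : GoodPath n k σ) (hkn : k < n) :
    ∃ v : Fin n, GoodPath n (k + 1) (Fin.snoc σ v) := by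
  obtain ⟨hinj, hrange, hcount⟩ := h
  obtain ⟨v, hv, hcover⟩ := exists_fresh_value hkn hrange
  set σ' : Fin (k + 1) → Fin n := Fin.snoc σ v
  have hrange' : ∀ w : Fin n, (w : ℕ) < k → w ∈ Set.range σ' := by
    intro w hw
    rcases hcover w hw with ⟨l, rfl⟩ | rfl
    · exact ⟨l.castSucc, Fin.snoc_castSucc ..⟩
    · exact ⟨Fin.last k, Fin.snoc_last ..⟩
  refine ⟨v, Fin.snoc_injective_of_injective hinj hv, fun w hw => hrange' w (by omega),
    fun j hj hjk => ?_⟩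
  show j - 1 ≤ lowCount σ' j
  rcases Nat.lt_or_eq_of_le hjk with hjk | rfl
  · exact (hcount j hj (by omega)).trans (lowCount_le_lowCount_snoc σ v j)
  · calc k + 1 - 1 = k := by omega
      _ ≤ #{l : Fin (k + 1) | ((σ' l : Fin n) : ℕ) < k} :=
        le_card_filter_of_lt_mem_range hkn.le hrange'
      _ ≤ lowCount σ' (k + 1) := card_le_card fun l hl => by
        simp only [mem_filter, mem_univ, true_and] at hl ⊢
        omega

theorem comp_swap {σ : Fin k → Fin n} (h : GoodPath n k σ) (hk : 0 < k) :
    GoodPath n k (σ ∘ Equiv.swap ⟨k - 2, by omega⟩ ⟨k - 1, by omega⟩) := by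
  obtain ⟨hinj, hrange, hcount⟩ := h
  set e := Equiv.swap (⟨k - 2, by omega⟩ : Fin k) ⟨k - 1, by omega⟩
  refine ⟨hinj.comp e.injective, fun w hw => ?_, fun j hj hjk => ?_⟩
  · obtain ⟨l, rfl⟩ := hrange w hw
    exact ⟨e l, by simp [e]⟩
  show j - 1 ≤ lowCount (σ ∘ e) j
  rw [lowCount_comp_perm, Equiv.symm_swap]
  by_cases hj' : j = k - 1
  · subst hj'
    have hkn : k ≤ n := by simpa using Fintype.card_le_of_injective σ hinj
    have hlow := le_card_filter_of_lt_mem_range (σ := σ) (m := k - 1) (by omega) hrange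
    calc k - 1 - 1 ≤ #{l : Fin k | ((σ l : Fin n) : ℕ) < k - 1} - 1 := by omega
      _ ≤ #(Finset.erase {l : Fin k | ((σ l : Fin n) : ℕ) < k - 1} ⟨k - 2, by omega⟩) :=
        pred_card_le_card_erase
      _ = _ := by
        congr 1
        ext l
        simp only [mem_erase, mem_filter, mem_univ, true_and, val_swap_lt_pred_iff hk]
  · simp only [val_swap_lt_iff hk hj' hjk]
    exact hcount j hj hjk

end GoodPath

theorem goodPaths_admissible_general (n : ℕ) :
    (∀ j : Fin n, ∃ σ : Fin 1 → Fin n, GoodPath n 1 σ ∧ σ 0 = j) ∧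
    (∀ k : ℕ, 1 ≤ k → k < n → ∀ σt : Fin k → Fin n, GoodPath n k σt →
      ∃ σ : Fin (k + 1) → Fin n, GoodPath n (k + 1) σ ∧ ∀ i : Fin k, σ i.castSucc = σt i) ∧
    (∀ k : ℕ, 2 ≤ k → k ≤ n → ∀ σ : Fin k → Fin n, GoodPath n k σ →
      ∃ τ : Fin k → Fin n, GoodPath n k τ ∧
        (∀ i : Fin k, (i : ℕ) < k - 2 → τ i = σ i) ∧
        ∀ (h1 : k - 2 < k) (h2 : k - 1 < k),
          σ ⟨k - 2, h1⟩ = τ ⟨k - 1, h2⟩ ∧ τ ⟨k - 2, h1⟩ = σ ⟨k - 1, h2⟩) := by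
  refine ⟨fun j => ?_, fun k _ hkn σt hσt => ?_, fun k hk _ σ hσ => ?_⟩
  · refine ⟨fun _ => j, ⟨fun a b _ => Subsingleton.elim a b, ?_, ?_⟩, rfl⟩ <;> intros <;> omega
  · obtain ⟨v, hv⟩ := hσt.exists_snoc hkn
    exact ⟨_, hv, fun i => Fin.snoc_castSucc ..⟩
  · refine ⟨_, hσ.comp_swap (by omega), fun i hi => ?_, fun _ _ => ?_⟩
    · rw [Function.comp_apply, Equiv.swap_apply_of_ne_of_ne] <;> simp [Fin.ext_iff] <;> omega
    · simp

/-- The collection of all `GoodPath`s is an admissible collection of paths in `I_n`. -/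
theorem goodPaths_admissible (n : ℕ) (hn : 1 ≤ n) :
    (∀ j : Fin n, ∃ σ : Fin 1 → Fin n, GoodPath n 1 σ ∧ σ 0 = j) ∧
    (∀ k : ℕ, 1 ≤ k → k < n → ∀ σt : Fin k → Fin n, GoodPath n k σt →
      ∃ σ : Fin (k + 1) → Fin n, GoodPath n (k + 1) σ ∧ ∀ i : Fin k, σ i.castSucc = σt i) ∧
    (∀ k : ℕ, 2 ≤ k → k ≤ n → ∀ σ : Fin k → Fin n, GoodPath n k σ →
      ∃ τ : Fin k → Fin n, GoodPath n k τ ∧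
        (∀ i : Fin k, (i : ℕ) < k - 2 → τ i = σ i) ∧
        ∀ (h1 : k - 2 < k) (h2 : k - 1 < k),
          σ ⟨k - 2, h1⟩ = τ ⟨k - 1, h2⟩ ∧ τ ⟨k - 2, h1⟩ = σ ⟨k - 1, h2⟩) :=
  goodPaths_admissible_general n
end

section
/- Let d ≥ 1 and n ≥ 1 be integers, let Q be a dyadic cube in ℝ^d, let p_1,…,p_n ∈ (1,∞), let f_1,…,f_n with f_j ∈ L^{p_j}(ℝ^d) and ‖f_j‖_{p_j} > 0 for each j, and let ε > 0. Let 𝒫₁ be the collection of maximal dyadic cubes P contained in Q for which there exists some 1 ≤ j ≤ n with |P|^{−1}‖f_j·1_P‖_{p_j}^{p_j} ≥ n·ε^{−1}·|Q|^{−1}‖f_j‖_{p_j}^{p_j}. Then the cubes of 𝒫₁ are pairwise disjoint and ∑_{P∈𝒫₁} |P| ≤ ε|Q|. -/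
/-!
Each cube `P ∈ 𝒫₁` satisfies, for some `j`,
`|P| ≤ ε |Q| / (n ‖f_j‖_{p_j}^{p_j}) · ∫_P |f_j|^{p_j}`.
Two dyadic cubes are nested or disjoint, so the maximal ones are pairwise disjoint, and summing
the bound over `P` spends at most the total mass `‖f_j‖_{p_j}^{p_j}` for each `j`: the `n`
indices contribute at most `n · ε |Q| / n`.
-/

open MeasureTheory
open scoped ENNReal

noncomputable section

/-- A dyadic cube in `ι → ℝ`: a product of dyadic intervals `[2^m l, 2^m (l+1))`
of equal sidelength. -/
def IsDyadicCube {ι : Type*} [Fintype ι] (P : Set (ι → ℝ)) : Prop :=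
  ∃ (m : ℤ) (l : ι → ℤ),
    P = Set.univ.pi fun i => Set.Ico ((2:ℝ) ^ m * (l i : ℝ)) ((2:ℝ) ^ m * ((l i : ℝ) + 1))

/-- A dyadic test function: a finite linear combination of indicators of dyadic cubes. -/
def IsDyadicTest {ι : Type*} [Fintype ι] (f : (ι → ℝ) → ℝ) : Prop :=
  ∃ (N : ℕ) (c : Fin N → ℝ) (P : Fin N → Set (ι → ℝ)),
    (∀ i, IsDyadicCube (P i)) ∧
    f = fun x => ∑ i, c i * Set.indicator (P i) (fun _ => (1:ℝ)) x

/-- `P'` is a dyadic child of `P`: a dyadic subcube of half the sidelength. -/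
def IsDyadicChild {ι : Type*} [Fintype ι] (P' P : Set (ι → ℝ)) : Prop :=
  IsDyadicCube P' ∧ IsDyadicCube P ∧ P' ⊆ P ∧
    volume P = 2 ^ (Fintype.card ι) * volume P'

/-- The `L^p` norm (valued in `ℝ≥0∞`). -/
def lpNorm {ι : Type*} [Fintype ι] (p : ℝ) (f : (ι → ℝ) → ℝ) : ℝ≥0∞ :=
  eLpNorm f (ENNReal.ofReal p) volume

/-- The `L^p` norm (real-valued). -/
def lpNormR {ι : Type*} [Fintype ι] (p : ℝ) (f : (ι → ℝ) → ℝ) : ℝ :=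
  (eLpNorm f (ENNReal.ofReal p) volume).toReal

/-- A Hölder tuple of exponents: `1 < p j < ∞` with `∑ 1/p j = 1`. -/
def IsHolderTuple {n : ℕ} (p : Fin n → ℝ) : Prop :=
  (∀ j, 1 < p j) ∧ ∑ j, 1 / p j = 1

/-- A perfect `n`-linear Calderón–Zygmund form on `ℝ^d`. -/
structure IsPerfectCZForm (d n : ℕ)
    (Λ : MultilinearMap ℝ (fun _ : Fin n => (Fin d → ℝ) → ℝ) ℝ) : Prop where
  /-- Dyadic decay. -/
  decay : ∀ p : Fin n → ℝ, IsHolderTuple p →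
    ∀ P : Set (Fin d → ℝ), IsDyadicCube P →
    ∀ f : Fin n → (Fin d → ℝ) → ℝ,
      (∀ j, IsDyadicTest (f j)) →
      (∀ j, Function.support (f j) ⊆ P) →
      (∃ i j : Fin n, i ≠ j ∧ ∃ Pi Pj : Set (Fin d → ℝ),
        IsDyadicChild Pi P ∧ IsDyadicChild Pj P ∧ Pi ≠ Pj ∧
        Function.support (f i) ⊆ Pi ∧ Function.support (f j) ⊆ Pj) →
      ENNReal.ofReal |Λ f| ≤ ∏ j, lpNorm (p j) (f j)
  /-- Perfect smoothness. -/
  smooth : ∀ f : Fin n → (Fin d → ℝ) → ℝ, (∀ j, IsDyadicTest (f j)) →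
    ∀ P : Set (Fin d → ℝ), IsDyadicCube P →
    ∀ i j : Fin n, i ≠ j →
      Function.support (f j) ⊆ P → (∫ x, f j x) = 0 →
      (∀ x ∈ P, f i x = 0) → Λ f = 0
  /-- Qualitative truncation: the kernel is a dyadic test function on `ℝ^{dn}`. -/
  trunc : ∃ K : (Fin n × Fin d → ℝ) → ℝ, IsDyadicTest K ∧
    ∀ f : Fin n → (Fin d → ℝ) → ℝ, (∀ j, IsDyadicTest (f j)) →
      Λ f = ∫ x : Fin n × Fin d → ℝ, K x * ∏ j, f j (fun i => x (j, i))

open Set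

def dyadicCube {ι : Type*} (m : ℤ) (l : ι → ℤ) : Set (ι → ℝ) :=
  univ.pi fun i => Ico ((2:ℝ) ^ m * (l i : ℝ)) ((2:ℝ) ^ m * ((l i : ℝ) + 1))

lemma floor_div_two_zpow_of_le {m m' : ℤ} (h : m ≤ m') (x : ℝ) :
    ⌊x / 2 ^ m'⌋ = ⌊x / 2 ^ m⌋ / 2 ^ (m' - m).toNat := by
  obtain ⟨k, rfl⟩ := Int.exists_add_of_le h
  have h2k : (2:ℝ) ^ (k:ℤ) = ((2 ^ k : ℕ) : ℝ) := by push_cast; rfl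
  rw [zpow_add₀ two_ne_zero, ← div_div, h2k, Int.floor_div_natCast]
  simp

section Dyadic

variable {ι : Type*}

lemma mem_dyadicCube_iff {m : ℤ} {l : ι → ℤ} {x : ι → ℝ} :
    x ∈ dyadicCube m l ↔ ∀ i, ⌊x i / 2 ^ m⌋ = l i := by
  have h2m : (0:ℝ) < 2 ^ m := by positivity
  simp only [dyadicCube, mem_univ_pi, mem_Ico, Int.floor_eq_iff, le_div_iff₀ h2m,
    div_lt_iff₀ h2m, mul_comm]

lemma dyadicCube_subset_of_le {m m' : ℤ} (h : m ≤ m') {l l' : ι → ℤ}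
    (hne : (dyadicCube m l ∩ dyadicCube m' l').Nonempty) :
    dyadicCube m l ⊆ dyadicCube m' l' := by
  obtain ⟨x, hx, hx'⟩ := hne
  intro y hy
  rw [mem_dyadicCube_iff] at hx hx' hy ⊢
  intro i
  rw [← hx' i, floor_div_two_zpow_of_le h, floor_div_two_zpow_of_le h, hy i, hx i]

variable [Fintype ι] {P P' : Set (ι → ℝ)}

lemma isDyadicCube_iff : IsDyadicCube P ↔ ∃ m l, P = dyadicCube m l :=
  Iff.rfl

lemma volume_dyadicCube (m : ℤ) (l : ι → ℤ) :
    volume (dyadicCube m l) = ENNReal.ofReal (2 ^ m) ^ Fintype.card ι := by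
  simp [dyadicCube, volume_pi_pi, Real.volume_Ico, ← mul_sub]

lemma IsDyadicCube.subset_or_subset_or_disjoint (hP : IsDyadicCube P) (hP' : IsDyadicCube P') :
    P ⊆ P' ∨ P' ⊆ P ∨ Disjoint P P' := by
  obtain ⟨m, l, rfl⟩ := isDyadicCube_iff.1 hP
  obtain ⟨m', l', rfl⟩ := isDyadicCube_iff.1 hP'
  rcases disjoint_or_nonempty_inter (dyadicCube m l) (dyadicCube m' l') with h | h
  · exact Or.inr (Or.inr h)
  rcases le_total m m' with hm | hm
  · exact Or.inl (dyadicCube_subset_of_le hm h)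
  · exact Or.inr (Or.inl (dyadicCube_subset_of_le hm (inter_comm _ _ ▸ h)))

lemma IsDyadicCube.measurableSet (hP : IsDyadicCube P) : MeasurableSet P := by
  obtain ⟨m, l, rfl⟩ := isDyadicCube_iff.1 hP
  exact MeasurableSet.univ_pi fun _ => measurableSet_Ico

lemma IsDyadicCube.volume_ne_zero (hP : IsDyadicCube P) : volume P ≠ 0 := by
  obtain ⟨m, l, rfl⟩ := isDyadicCube_iff.1 hP
  simp [volume_dyadicCube, zpow_pos]

lemma IsDyadicCube.volume_ne_top (hP : IsDyadicCube P) : volume P ≠ ⊤ := by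
  obtain ⟨m, l, rfl⟩ := isDyadicCube_iff.1 hP
  simp [volume_dyadicCube]

end Dyadic

lemma IsAntichain.pairwise_disjoint_of_nested_or_disjoint {α : Type*} {S : Set (Set α)}
    (hanti : IsAntichain (· ⊆ ·) S)
    (hnest : ∀ A ∈ S, ∀ B ∈ S, A ⊆ B ∨ B ⊆ A ∨ Disjoint A B) : S.Pairwise Disjoint := by
  intro A hA B hB hAB
  rcases hnest A hA B hB with h | h | h
  · exact absurd h (hanti hA hB hAB)
  · exact absurd h (hanti hB hA hAB.symm)
  · exact h

section Measure

variable {α : Type*} [MeasurableSpace α] {μ : Measure α}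

lemma tsum_setLIntegral_le_lintegral {S : Set (Set α)} (hmeas : ∀ P ∈ S, MeasurableSet P)
    (hdisj : S.Pairwise Disjoint) (g : α → ℝ≥0∞) :
    ∑' P : S, ∫⁻ x in P, g x ∂μ ≤ ∫⁻ x, g x ∂μ :=
  calc ∑' P : S, ∫⁻ x in P, g x ∂μ = ∑' P : S, μ.withDensity g P :=
        tsum_congr fun P => (withDensity_apply g (hmeas P P.2)).symm
    _ ≤ μ.withDensity g (⋃ P : S, P) :=
        tsum_meas_le_meas_iUnion_of_disjoint _ (fun P => hmeas P P.2)
          fun P P' hPP' => hdisj P.2 P'.2 (Subtype.coe_injective.ne hPP')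
    _ ≤ μ.withDensity g univ := measure_mono (subset_univ _)
    _ = ∫⁻ x, g x ∂μ := by rw [withDensity_apply _ MeasurableSet.univ, Measure.restrict_univ]

lemma tsum_measure_le_sum_mul_lintegral {ι : Type*} [Fintype ι] {S : Set (Set α)}
    (hmeas : ∀ P ∈ S, MeasurableSet P) (hdisj : S.Pairwise Disjoint)
    (c : ι → ℝ≥0∞) (g : ι → α → ℝ≥0∞)
    (hcover : ∀ P ∈ S, ∃ j, μ P ≤ c j * ∫⁻ x in P, g j x ∂μ) :
    ∑' P : S, μ P ≤ ∑ j, c j * ∫⁻ x, g j x ∂μ :=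
  calc ∑' P : S, μ P ≤ ∑' P : S, ∑ j, c j * ∫⁻ x in P, g j x ∂μ :=
        ENNReal.tsum_le_tsum fun P => by
          obtain ⟨j, hj⟩ := hcover P P.2
          exact hj.trans (Finset.single_le_sum (f := fun i => c i * ∫⁻ x in P, g i x ∂μ)
            (fun _ _ => zero_le) (Finset.mem_univ j))
    _ = ∑ j, c j * ∑' P : S, ∫⁻ x in P, g j x ∂μ := by
        rw [Summable.tsum_finsetSum fun _ _ => ENNReal.summable]
        simp only [ENNReal.tsum_mul_left]
    _ ≤ ∑ j, c j * ∫⁻ x, g j x ∂μ := by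
        gcongr with j
        exact tsum_setLIntegral_le_lintegral hmeas hdisj (g j)

lemma measure_le_ofReal_inv_mul_setLIntegral {g : α → ℝ} (hg : Integrable g μ) (hg0 : 0 ≤ g)
    {P : Set α} (hP₀ : μ P ≠ 0) (hP : μ P ≠ ∞) {a : ℝ} (ha : 0 < a)
    (h : a ≤ (μ P).toReal⁻¹ * ∫ x in P, g x ∂μ) :
    μ P ≤ ENNReal.ofReal a⁻¹ * ∫⁻ x in P, ENNReal.ofReal (g x) ∂μ := by
  have hPpos : 0 < (μ P).toReal := ENNReal.toReal_pos hP₀ hP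
  have hreal : (μ P).toReal ≤ a⁻¹ * ∫ x in P, g x ∂μ := by
    rw [le_inv_mul_iff₀ ha]
    rwa [le_inv_mul_iff₀ hPpos, mul_comm] at h
  rw [← ofReal_integral_eq_lintegral_ofReal hg.integrableOn (ae_of_all _ hg0),
    ← ENNReal.ofReal_mul (inv_nonneg.2 ha.le), ← ENNReal.ofReal_toReal hP]
  exact ENNReal.ofReal_le_ofReal hreal

lemma integrable_abs_rpow {f : α → ℝ} {p : ℝ} (hp : 0 < p)
    (hf : MemLp f (ENNReal.ofReal p) μ) :
    Integrable (fun x => |f x| ^ p) μ := by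
  simpa [ENNReal.toReal_ofReal hp.le] using
    hf.integrable_norm_rpow (by simpa using hp) ENNReal.ofReal_ne_top

lemma integral_abs_rpow_pos {f : α → ℝ} {p : ℝ} (hp : 0 < p)
    (hf : MemLp f (ENNReal.ofReal p) μ) (hf₀ : eLpNorm f (ENNReal.ofReal p) μ ≠ 0) :
    0 < ∫ x, |f x| ^ p ∂μ := by
  rw [hf.eLpNorm_eq_integral_rpow_norm (by simpa using hp) ENNReal.ofReal_ne_top] at hf₀
  simp only [ne_eq, ENNReal.ofReal_eq_zero, not_le, Real.norm_eq_abs,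
    ENNReal.toReal_ofReal hp.le] at hf₀
  refine (integral_nonneg fun x => by positivity).lt_of_ne fun h => ?_
  rw [← h, Real.zero_rpow (inv_ne_zero hp.ne')] at hf₀
  exact hf₀.false

end Measure

theorem stopping_time_P1_general (d n : ℕ) (hn : 1 ≤ n)
    (Q : Set (Fin d → ℝ)) (hQ : IsDyadicCube Q)
    (p : Fin n → ℝ) (hp : ∀ j, 1 < p j)
    (f : Fin n → (Fin d → ℝ) → ℝ)
    (hf : ∀ j, MemLp (f j) (ENNReal.ofReal (p j)) volume)
    (hfpos : ∀ j, eLpNorm (f j) (ENNReal.ofReal (p j)) volume ≠ 0)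
    (ε : ℝ) (hε : 0 < ε)
    (P1 : Set (Set (Fin d → ℝ)))
    (hP1 : P1 = {P | IsDyadicCube P ∧ P ⊆ Q ∧
      (∃ j : Fin n,
        (n : ℝ) * ε⁻¹ * ((volume Q).toReal)⁻¹ * (∫ x, |f j x| ^ (p j)) ≤
          ((volume P).toReal)⁻¹ * ∫ x in P, |f j x| ^ (p j)) ∧
      ∀ P' : Set (Fin d → ℝ), IsDyadicCube P' → P ⊂ P' → P' ⊆ Q →
        ¬ ∃ j : Fin n,
          (n : ℝ) * ε⁻¹ * ((volume Q).toReal)⁻¹ * (∫ x, |f j x| ^ (p j)) ≤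
            ((volume P').toReal)⁻¹ * ∫ x in P', |f j x| ^ (p j)}) :
    (P1.Pairwise fun A B => Disjoint A B) ∧
    ∑' P : P1, volume (P : Set (Fin d → ℝ)) ≤ ENNReal.ofReal ε * volume Q := by
  have hg j : Integrable (fun x => |f j x| ^ p j) :=
    integrable_abs_rpow (by linarith [hp j]) (hf j)
  have hQ₀ : 0 < (volume Q).toReal := ENNReal.toReal_pos hQ.volume_ne_zero hQ.volume_ne_top
  have hn₀ : (0 : ℝ) < n := by exact_mod_cast hn
  have hI j : 0 < ∫ x, |f j x| ^ p j :=
    integral_abs_rpow_pos (by linarith [hp j]) (hf j) (hfpos j)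
  have hthreshold j : 0 < (n : ℝ) * ε⁻¹ * ((volume Q).toReal)⁻¹ * ∫ x, |f j x| ^ p j :=
    mul_pos (by positivity) (hI j)
  have hdisj : P1.Pairwise Disjoint := by
    subst hP1
    refine IsAntichain.pairwise_disjoint_of_nested_or_disjoint ?_
      fun A hA B hB => hA.1.subset_or_subset_or_disjoint hB.1
    exact fun A hA B hB hAB hAB' => hA.2.2.2 B hB.1 (hAB'.ssubset_of_ne hAB) hB.2.1 hB.2.2.1
  refine ⟨hdisj, ?_⟩
  calc ∑' P : P1, volume (P : Set (Fin d → ℝ))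
      ≤ ∑ j,
          ENNReal.ofReal ((n : ℝ) * ε⁻¹ * ((volume Q).toReal)⁻¹ * ∫ x, |f j x| ^ p j)⁻¹
            * ∫⁻ x, ENNReal.ofReal (|f j x| ^ p j) := by
        subst hP1
        refine tsum_measure_le_sum_mul_lintegral (fun P hP => hP.1.measurableSet) hdisj _ _ ?_
        rintro P ⟨hPcube, -, ⟨j, hj⟩, -⟩
        exact ⟨j, measure_le_ofReal_inv_mul_setLIntegral (hg j) (fun x => by positivity)
          hPcube.volume_ne_zero hPcube.volume_ne_top (hthreshold j) hj⟩
    _ = ∑ _j : Fin n, ENNReal.ofReal (ε * (volume Q).toReal / n) := by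
        refine Finset.sum_congr rfl fun j _ => ?_
        rw [← ofReal_integral_eq_lintegral_ofReal (hg j) (ae_of_all _ fun x => by positivity),
          ← ENNReal.ofReal_mul (inv_nonneg.2 (hthreshold j).le)]
        congr 1
        field_simp [(hI j).ne']
    _ = ENNReal.ofReal ε * volume Q := by
        rw [Finset.sum_const, Finset.card_univ, Fintype.card_fin, ← ENNReal.ofReal_nsmul,
          nsmul_eq_mul, mul_div_cancel₀ _ hn₀.ne', ENNReal.ofReal_mul hε.le,
          ENNReal.ofReal_toReal hQ.volume_ne_top]

/-- The stopping-time estimate for the collection `𝒫₁` of maximal dyadic cubes `P ⊆ Q`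
on which some `f_j` has large `L^{p_j}` mass: the cubes are pairwise disjoint and their
total measure is at most `ε |Q|`. -/
theorem stopping_time_P1 (d n : ℕ) (hd : 1 ≤ d) (hn : 1 ≤ n)
    (Q : Set (Fin d → ℝ)) (hQ : IsDyadicCube Q)
    (p : Fin n → ℝ) (hp : ∀ j, 1 < p j)
    (f : Fin n → (Fin d → ℝ) → ℝ)
    (hf : ∀ j, MemLp (f j) (ENNReal.ofReal (p j)) volume)
    (hfpos : ∀ j, eLpNorm (f j) (ENNReal.ofReal (p j)) volume ≠ 0)
    (ε : ℝ) (hε : 0 < ε)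
    (P1 : Set (Set (Fin d → ℝ)))
    (hP1 : P1 = {P | IsDyadicCube P ∧ P ⊆ Q ∧
      (∃ j : Fin n,
        (n : ℝ) * ε⁻¹ * ((volume Q).toReal)⁻¹ * (∫ x, |f j x| ^ (p j)) ≤
          ((volume P).toReal)⁻¹ * ∫ x in P, |f j x| ^ (p j)) ∧
      ∀ P' : Set (Fin d → ℝ), IsDyadicCube P' → P ⊂ P' → P' ⊆ Q →
        ¬ ∃ j : Fin n,
          (n : ℝ) * ε⁻¹ * ((volume Q).toReal)⁻¹ * (∫ x, |f j x| ^ (p j)) ≤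
            ((volume P').toReal)⁻¹ * ∫ x in P', |f j x| ^ (p j)}) :
    (P1.Pairwise fun A B => Disjoint A B) ∧
    ∑' P : P1, volume (P : Set (Fin d → ℝ)) ≤ ENNReal.ofReal ε * volume Q :=
  stopping_time_P1_general d n hn Q hQ p hp f hf hfpos ε hε P1 hP1
end
end

section
/- Let d ≥ 1, let Q be a dyadic cube in ℝ^d, let 1 < q < ∞ and B ≥ 1, and let u ∈ L^q(ℝ^d) be supported on Q with ∫ u = |Q| and ∫ |u|^q ≤ B|Q|. Let 𝒫 be any collection of pairwise disjoint dyadic cubes P contained in Q satisfying |[u]_P| ≤ 1/8 for each P ∈ 𝒫, and set E := Q \ ⋃_{P∈𝒫} P. Then |E| ≥ (7/8)^{q/(q−1)}·B^{−1/(q−1)}·|Q|; equivalently, ∑_{P∈𝒫} |P| ≤ (1 − (7/8)^{q/(q−1)}·B^{−1/(q−1)})·|Q|. -/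
/-!
Put `U := ⋃ 𝒫` and `E := Q \ U`. Summing the small averages over the disjoint cubes gives
`∫_U u ≤ |U| / 8 ≤ |Q| / 8`, so `∫_E u ≥ 7/8 |Q|`. Hölder's inequality bounds the same integral by
`‖u‖_q |E|^{1 - 1/q} ≤ (B |Q|)^{1/q} |E|^{1 - 1/q}`; raising to the power `q / (q - 1)` and
solving for `|E|` gives the lower bound, and `∑ |P| = |U| = |Q| - |E|` gives the upper one.
-/

open MeasureTheory
open scoped ENNReal

noncomputable section

open Set Function

namespace IsDyadicCube

variable {ι : Type*} [Fintype ι] {P : Set (ι → ℝ)}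

lemma measurableSet_s6 (h : IsDyadicCube P) : MeasurableSet P := by
  obtain ⟨m, l, rfl⟩ := h
  exact .univ_pi fun _ => measurableSet_Ico

lemma volume_eq (h : IsDyadicCube P) :
    ∃ m : ℤ, volume P = ENNReal.ofReal ((2 : ℝ) ^ m) ^ Fintype.card ι := by
  obtain ⟨m, l, rfl⟩ := h
  refine ⟨m, ?_⟩
  simp only [volume_pi_pi, Real.volume_Ico, ← mul_sub, add_sub_cancel_left, mul_one,
    Finset.prod_const, Finset.card_univ]

lemma volume_pos (h : IsDyadicCube P) : 0 < volume P := by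
  obtain ⟨m, hm⟩ := h.volume_eq
  rw [hm]
  exact ENNReal.pow_pos (ENNReal.ofReal_pos.2 (zpow_pos two_pos m)) _

lemma volume_ne_top_s6 (h : IsDyadicCube P) : volume P ≠ ∞ := by
  obtain ⟨m, hm⟩ := h.volume_eq
  rw [hm]
  exact ENNReal.pow_ne_top ENNReal.ofReal_ne_top

end IsDyadicCube

lemma countable_setOf_isDyadicCube (ι : Type*) [Fintype ι] :
    {P : Set (ι → ℝ) | IsDyadicCube P}.Countable :=
  (countable_range fun p : ℤ × (ι → ℤ) => univ.pi fun i =>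
      Ico ((2 : ℝ) ^ p.1 * p.2 i) ((2 : ℝ) ^ p.1 * (p.2 i + 1))).mono
    (by rintro _ ⟨m, l, rfl⟩; exact ⟨(m, l), rfl⟩)

lemma rpow_mul_rpow_neg_mul_le_of_mul_le_rpow_mul_rpow {p a B V e : ℝ} (hp : 1 < p)
    (ha : 0 ≤ a) (hB : 0 < B) (hV : 0 < V) (he : 0 ≤ e)
    (h : a * V ≤ (B * V) ^ (1 / p) * e ^ (1 - 1 / p)) :
    a ^ (p / (p - 1)) * B ^ (-(1 / (p - 1))) * V ≤ e := by
  have hp1 : p - 1 ≠ 0 := (sub_pos.2 hp).ne'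
  have hraised : (a * V) ^ (p / (p - 1)) ≤ (B * V) ^ (1 / (p - 1)) * e := by
    calc (a * V) ^ (p / (p - 1))
        ≤ ((B * V) ^ (1 / p) * e ^ (1 - 1 / p)) ^ (p / (p - 1)) := by gcongr
      _ = (B * V) ^ (1 / p * (p / (p - 1))) * e ^ ((1 - 1 / p) * (p / (p - 1))) := by
        rw [Real.mul_rpow (by positivity) (by positivity), ← Real.rpow_mul (by positivity),
          ← Real.rpow_mul he]
      _ = (B * V) ^ (1 / (p - 1)) * e := by
        rw [show 1 / p * (p / (p - 1)) = 1 / (p - 1) by field_simp,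
          show (1 - 1 / p) * (p / (p - 1)) = 1 by field_simp, Real.rpow_one]
  have hVr : V ^ (p / (p - 1)) = V ^ (1 / (p - 1)) * V := by
    rw [show p / (p - 1) = 1 / (p - 1) + 1 by field_simp; ring, Real.rpow_add_one hV.ne']
  rw [Real.mul_rpow ha hV.le, Real.mul_rpow hB.le hV.le, hVr] at hraised
  have hcancel : a ^ (p / (p - 1)) * V ≤ B ^ (1 / (p - 1)) * e :=
    le_of_mul_le_mul_right (by linarith) (Real.rpow_pos_of_pos hV (1 / (p - 1)))
  rw [Real.rpow_neg hB.le, mul_right_comm, ← div_eq_mul_inv, div_le_iff₀ (by positivity)]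
  linarith

section

variable {α : Type*} [MeasurableSpace α] {μ : Measure α} {f : α → ℝ}

lemma setIntegral_le_mul_measureReal_of_abs_average_le {s : Set α} {c : ℝ} (hs : μ s ≠ ∞)
    (h : |(μ.real s)⁻¹ * ∫ x in s, f x ∂μ| ≤ c) : ∫ x in s, f x ∂μ ≤ c * μ.real s := by
  rcases measureReal_nonneg.eq_or_lt with h0 | hpos
  · rw [← h0, mul_zero, Measure.restrict_eq_zero.2 ((measureReal_eq_zero_iff hs).1 h0.symm),
      integral_zero_measure]
  · calc ∫ x in s, f x ∂μ = μ.real s * ((μ.real s)⁻¹ * ∫ x in s, f x ∂μ) := by field_simp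
      _ ≤ μ.real s * c := mul_le_mul_of_nonneg_left ((le_abs_self _).trans h) hpos.le
      _ = c * μ.real s := mul_comm _ _

lemma setIntegral_iUnion_le_mul_measureReal {ι : Type*} [Countable ι] {s : ι → Set α} {c : ℝ}
    (hm : ∀ i, MeasurableSet (s i)) (hd : Pairwise (Disjoint on s))
    (hf : IntegrableOn f (⋃ i, s i) μ) (hμ : μ (⋃ i, s i) ≠ ∞)
    (h : ∀ i, ∫ x in s i, f x ∂μ ≤ c * μ.real (s i)) :
    ∫ x in ⋃ i, s i, f x ∂μ ≤ c * μ.real (⋃ i, s i) := by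
  have hvol : HasSum (fun i => μ.real (s i)) (μ.real (⋃ i, s i)) := by
    rw [measure_iUnion hd hm] at hμ
    rw [measureReal_def, measure_iUnion hd hm, ENNReal.tsum_toReal_eq
      fun i => ne_top_of_le_ne_top hμ (ENNReal.le_tsum i)]
    exact ENNReal.hasSum_toReal hμ
  exact hasSum_le h (hasSum_integral_iUnion hm hd hf) (hvol.mul_left c)

lemma one_sub_mul_measureReal_le_setIntegral_sdiff {s t : Set α} {c : ℝ} (hts : t ⊆ s)
    (ht : MeasurableSet t) (hs : μ s ≠ ∞) (hc : 0 ≤ c) (hf : IntegrableOn f s μ)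
    (hfs : ∫ x in s, f x ∂μ = μ.real s) (hft : ∫ x in t, f x ∂μ ≤ c * μ.real t) :
    (1 - c) * μ.real s ≤ ∫ x in s \ t, f x ∂μ := by
  rw [setIntegral_sdiff ht hf hts, hfs]
  nlinarith [mul_le_mul_of_nonneg_left (measureReal_mono hts hs) hc]

lemma setIntegral_le_integral_rpow_mul_measureReal_rpow {p : ℝ} {s : Set α} (hp : 1 < p)
    (hf : MemLp f (ENNReal.ofReal p) μ) (hs : μ s ≠ ∞) :
    ∫ x in s, f x ∂μ ≤ (∫ x, |f x| ^ p ∂μ) ^ (1 / p) * μ.real s ^ (1 - 1 / p) := by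
  have hpq := Real.HolderConjugate.conjExponent hp
  have := isFiniteMeasure_restrict.2 hs
  have holder := integral_mul_le_Lp_mul_Lq_of_nonneg (μ := μ.restrict s) hpq
    (ae_of_all _ fun x => abs_nonneg (f x)) (ae_of_all _ fun _ => zero_le_one)
    (hf.abs.restrict s) (memLp_const 1)
  simp only [mul_one, Real.one_rpow, integral_const, smul_eq_mul,
    measureReal_restrict_apply_univ] at holder
  have hfp : Integrable (fun x => |f x| ^ p) μ := by
    simpa [ENNReal.toReal_ofReal (by linarith : 0 ≤ p)] using
      hf.integrable_norm_rpow (ENNReal.ofReal_pos.2 (by linarith)).ne' ENNReal.ofReal_ne_top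
  calc ∫ x in s, f x ∂μ ≤ ∫ x in s, |f x| ∂μ := (le_abs_self _).trans abs_integral_le_integral_abs
    _ ≤ (∫ x in s, |f x| ^ p ∂μ) ^ (1 / p) * μ.real s ^ (1 / p.conjExponent) := holder
    _ ≤ (∫ x, |f x| ^ p ∂μ) ^ (1 / p) * μ.real s ^ (1 - 1 / p) := by
      rw [one_div p.conjExponent, ← hpq.one_sub_inv, one_div]
      have hle : ∫ x in s, |f x| ^ p ∂μ ≤ ∫ x, |f x| ^ p ∂μ :=
        setIntegral_le_integral hfp (ae_of_all _ fun x => by positivity)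
      have hnonneg : 0 ≤ ∫ x in s, |f x| ^ p ∂μ := integral_nonneg fun x => by positivity
      gcongr

lemma le_measureReal_of_mul_le_setIntegral {p a B V : ℝ} {E : Set α} (hp : 1 < p)
    (ha : 0 ≤ a) (hB : 0 < B) (hV : 0 < V) (hf : MemLp f (ENNReal.ofReal p) μ)
    (hfp : ∫ x, |f x| ^ p ∂μ ≤ B * V) (hE : μ E ≠ ∞) (hfE : a * V ≤ ∫ x in E, f x ∂μ) :
    a ^ (p / (p - 1)) * B ^ (-(1 / (p - 1))) * V ≤ μ.real E := by
  refine rpow_mul_rpow_neg_mul_le_of_mul_le_rpow_mul_rpow hp ha hB hV measureReal_nonneg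
    (hfE.trans ((setIntegral_le_integral_rpow_mul_measureReal_rpow hp hf hE).trans ?_))
  gcongr

lemma measure_le_ofReal_one_sub_mul {s t : Set α} {c : ℝ} (hts : t ⊆ s) (ht : MeasurableSet t)
    (hs : μ s ≠ ∞) (hc : 0 ≤ c) (h : ENNReal.ofReal c * μ s ≤ μ (s \ t)) :
    μ t ≤ ENNReal.ofReal (1 - c) * μ s := by
  have hsplit : μ t + μ (s \ t) = μ s := by
    rw [measure_add_sdiff ht.nullMeasurableSet, union_eq_self_of_subset_left hts]
  rw [ENNReal.ofReal_sub _ hc, ENNReal.ofReal_one, ENNReal.sub_mul fun _ _ => hs, one_mul]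
  calc μ t = μ s - μ (s \ t) :=
        ENNReal.eq_sub_of_add_eq (measure_ne_top_of_subset sdiff_subset hs) hsplit
    _ ≤ μ s - ENNReal.ofReal c * μ s := tsub_le_tsub_left h _

end

theorem stopping_time_smallMean_general (d : ℕ)
    (Q : Set (Fin d → ℝ)) (hQ : IsDyadicCube Q)
    (q B : ℝ) (hq : 1 < q) (hB : 1 ≤ B)
    (u : (Fin d → ℝ) → ℝ)
    (hu : MemLp u (ENNReal.ofReal q) volume)
    (husupp : Function.support u ⊆ Q)
    (humean : (∫ x, u x) = (volume Q).toReal)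
    (hunorm : (∫ x, |u x| ^ q) ≤ B * (volume Q).toReal)
    (Pc : Set (Set (Fin d → ℝ)))
    (hPc : ∀ P ∈ Pc, IsDyadicCube P ∧ P ⊆ Q)
    (hPcdisj : Pc.Pairwise fun A C => Disjoint A C)
    (hPcavg : ∀ P ∈ Pc, |((volume P).toReal)⁻¹ * ∫ x in P, u x| ≤ 1 / 8) :
    ENNReal.ofReal (((7:ℝ) / 8) ^ (q / (q - 1)) * B ^ (-(1 / (q - 1)))) * volume Q ≤
        volume (Q \ ⋃ P ∈ Pc, P) ∧
      ∑' P : Pc, volume (P : Set (Fin d → ℝ)) ≤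
        ENNReal.ofReal (1 - ((7:ℝ) / 8) ^ (q / (q - 1)) * B ^ (-(1 / (q - 1)))) * volume Q := by
  have : Countable Pc :=
    ((countable_setOf_isDyadicCube _).mono fun P hP => (hPc P hP).1).to_subtype
  have hmeas (P : Pc) : MeasurableSet (P : Set (Fin d → ℝ)) := (hPc P P.2).1.measurableSet_s6
  have hdisj : Pairwise (Disjoint on fun P : Pc => (P : Set (Fin d → ℝ))) :=
    fun P P' hne => hPcdisj P.2 P'.2 (Subtype.coe_injective.ne hne)
  rw [biUnion_eq_iUnion, ← measure_iUnion hdisj hmeas]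
  set U := ⋃ P : Pc, (P : Set (Fin d → ℝ))
  have hUQ : U ⊆ Q := iUnion_subset fun P => (hPc P P.2).2
  have huQ : IntegrableOn u Q := by
    have := isFiniteMeasure_restrict.2 hQ.volume_ne_top_s6
    exact (hu.restrict Q).integrable (by simpa using hq.le)
  have hQint : ∫ x in Q, u x = volume.real Q :=
    (setIntegral_eq_integral_of_forall_compl_eq_zero fun x hx =>
      notMem_support.1 fun h => hx (husupp h)).trans humean
  have hUint : ∫ x in U, u x ≤ 1 / 8 * volume.real U :=
    setIntegral_iUnion_le_mul_measureReal hmeas hdisj (huQ.mono_set hUQ)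
      (measure_ne_top_of_subset hUQ hQ.volume_ne_top_s6) fun P =>
      setIntegral_le_mul_measureReal_of_abs_average_le (hPc P P.2).1.volume_ne_top_s6 (hPcavg P P.2)
  have hEint : 7 / 8 * volume.real Q ≤ ∫ x in Q \ U, u x := by
    convert one_sub_mul_measureReal_le_setIntegral_sdiff hUQ (.iUnion hmeas) hQ.volume_ne_top_s6
      (by norm_num) huQ hQint hUint using 2
    norm_num
  have hEreal := le_measureReal_of_mul_le_setIntegral (a := 7 / 8) hq (by norm_num) (by linarith)
    (ENNReal.toReal_pos hQ.volume_pos.ne' hQ.volume_ne_top_s6) hu hunorm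
    (measure_ne_top_of_subset sdiff_subset hQ.volume_ne_top_s6) hEint
  have hE : ENNReal.ofReal ((7 / 8 : ℝ) ^ (q / (q - 1)) * B ^ (-(1 / (q - 1)))) * volume Q ≤
      volume (Q \ U) := by
    rw [← ofReal_measureReal hQ.volume_ne_top_s6, ← ENNReal.ofReal_mul (by positivity),
      ← ofReal_measureReal (measure_ne_top_of_subset sdiff_subset hQ.volume_ne_top_s6)]
    exact ENNReal.ofReal_le_ofReal hEreal
  exact ⟨hE, measure_le_ofReal_one_sub_mul hUQ (.iUnion hmeas) hQ.volume_ne_top_s6 (by positivity) hE⟩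

/-- The stopping-time estimate corresponding to `𝒫₄`: if `u ∈ L^q` is supported on the
dyadic cube `Q` with `∫ u = |Q|` and `∫ |u|^q ≤ B |Q|`, and `𝒫` is a pairwise disjoint
collection of dyadic cubes `P ⊆ Q` with `|[u]_P| ≤ 1/8`, then the complement `E` of
their union in `Q` satisfies `|E| ≥ (7/8)^{q/(q-1)} B^{-1/(q-1)} |Q|`; equivalently
`∑_{P∈𝒫} |P| ≤ (1 - (7/8)^{q/(q-1)} B^{-1/(q-1)}) |Q|`. -/
theorem stopping_time_smallMean (d : ℕ) (hd : 1 ≤ d)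
    (Q : Set (Fin d → ℝ)) (hQ : IsDyadicCube Q)
    (q B : ℝ) (hq : 1 < q) (hB : 1 ≤ B)
    (u : (Fin d → ℝ) → ℝ)
    (hu : MemLp u (ENNReal.ofReal q) volume)
    (husupp : Function.support u ⊆ Q)
    (humean : (∫ x, u x) = (volume Q).toReal)
    (hunorm : (∫ x, |u x| ^ q) ≤ B * (volume Q).toReal)
    (Pc : Set (Set (Fin d → ℝ)))
    (hPc : ∀ P ∈ Pc, IsDyadicCube P ∧ P ⊆ Q)
    (hPcdisj : Pc.Pairwise fun A C => Disjoint A C)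
    (hPcavg : ∀ P ∈ Pc, |((volume P).toReal)⁻¹ * ∫ x in P, u x| ≤ 1 / 8) :
    ENNReal.ofReal (((7:ℝ) / 8) ^ (q / (q - 1)) * B ^ (-(1 / (q - 1)))) * volume Q ≤
        volume (Q \ ⋃ P ∈ Pc, P) ∧
      ∑' P : Pc, volume (P : Set (Fin d → ℝ)) ≤
        ENNReal.ofReal (1 - ((7:ℝ) / 8) ^ (q / (q - 1)) * B ^ (-(1 / (q - 1)))) * volume Q :=
  stopping_time_smallMean_general d Q hQ q B hq hB u hu husupp humean hunorm Pc hPc hPcdisj hPcavg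

end
end
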